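/- arXiv:1810.01497 — 2 statements merged into one kernel-verified Lean document; each statement's English description precedes it below -/
import Mathlib

section
/- Let a ≥ 1 be a natural number and let T : ℕ → ℕ satisfy T(n) = n for every n ≤ a and T(n) ≤ T(⌈n·a/(a+1)⌉) + a·n for every n > a. Then there exists a constant C (depending only on T and a) such that T(n) ≤ C·n for all n ≥ 1. -/
/-- Proposition 2: the group-testing reduction, whose cost `T` satisfies
`T n = n` for `n ≤ a` and `T n ≤ T (⌈n·a/(a+1)⌉) + a·n` for `n > a`, uses
`O(n)` memory accesses. Here `⌈n·a/(a+1)⌉ = (n·a + a)/(a+1)` in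
natural-number (floor) division. -/
theorem stmt_5 (a : ℕ) (ha : 1 ≤ a) (T : ℕ → ℕ)
    (hbase : ∀ n, n ≤ a → T n = n)
    (hstep : ∀ n, a < n → T n ≤ T ((n * a + a) / (a + 1)) + a * n) :
    ∃ C : ℕ, ∀ n, 1 ≤ n → T n ≤ C * n := by
  refine ⟨a * (a + 1) ^ 2, ?_⟩
  intro n
  induction n using Nat.strong_induction_on with
  | _ n ih =>
    intro hn
    by_cases hna : n ≤ a
    · rw [hbase n hna]
      have : 1 ≤ a * (a + 1) ^ 2 := by nlinarith
      nlinarith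
    · push_neg at hna
      set m := (n * a + a) / (a + 1) with hm
      have hmlt : m < n := by
        rw [hm]
        apply Nat.div_lt_of_lt_mul
        nlinarith
      have hm1 : 1 ≤ m := by
        rw [hm]
        apply Nat.le_div_iff_mul_le (by omega) |>.mpr
        nlinarith
      have hmul : m * (a + 1) ≤ n * a + a := Nat.div_mul_le_self _ _
      -- key: a * n ≤ a*(a+1)^2 * (n - m)
      have hkey : a * n ≤ a * (a + 1) ^ 2 * (n - m) := by
        have hmn : m ≤ n := le_of_lt hmlt
        have h1 : (a + 1) * (n - m) ≥ n - a := by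
          have e1 : (a + 1) * n = n * a + n := by ring
          have e2 : (a + 1) * (n - m) + (a + 1) * m = (a + 1) * n := by
            rw [← Nat.mul_add, Nat.sub_add_cancel hmn]
          have e3 : (a + 1) * m = m * (a + 1) := by ring
          omega
        have h2 : (a + 1) * (n - a) ≥ n := by
          have : a ≤ n := le_of_lt hna
          nlinarith [Nat.sub_add_cancel this]
        have h3 : (a + 1) * ((a + 1) * (n - m)) ≥ (a + 1) * (n - a) :=
          Nat.mul_le_mul_left _ h1
        calc a * n ≤ a * ((a + 1) * ((a + 1) * (n - m))) := by
              apply Nat.mul_le_mul_left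
              omega
          _ = a * (a + 1) ^ 2 * (n - m) := by ring
      calc T n ≤ T m + a * n := hstep n hna
        _ ≤ a * (a + 1) ^ 2 * m + a * (a + 1) ^ 2 * (n - m) := by
              have := ih m hmlt hm1
              omega
        _ = a * (a + 1) ^ 2 * (m + (n - m)) := by ring
        _ = a * (a + 1) ^ 2 * n := by
              congr 1
              omega
end

section
/- Let S and P be finite sets with |S ∩ P| ≥ a, and let T₁, …, T_{a+1} be a partition of S into a+1 pairwise disjoint blocks whose union is S such that every block satisfies |T_i| ≥ ⌊|S|/(a+1)⌋. Then there exists an index i such that |(S \ T_i) ∩ P| ≥ a and |S \ T_i| ≤ |S| − ⌊|S|/(a+1)⌋. -/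
/-- Invariant of one round of the group-testing reduction: if every block of
an `(a+1)`-way partition of `S` has size at least `⌊|S|/(a+1)⌋`, then some
block can be discarded while preserving the eviction property, shrinking the
set by at least a `1/(a+1)` fraction (up to rounding). -/
theorem stmt_11 {α : Type*} [DecidableEq α] (S P : Finset α) (a : ℕ)
    (T : Fin (a + 1) → Finset α)
    (hdisj : ∀ i j, i ≠ j → Disjoint (T i) (T j))
    (hunion : Finset.univ.biUnion T = S)
    (hSP : a ≤ (S ∩ P).card)
    (hsize : ∀ i, S.card / (a + 1) ≤ (T i).card) :
    ∃ i : Fin (a + 1),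
      a ≤ ((S \ T i) ∩ P).card ∧
      (S \ T i).card ≤ S.card - S.card / (a + 1) := by
  set c := (S ∩ P).card with hc
  -- Sum of intersections equals c
  have hsub : ∀ i, T i ⊆ S := by
    intro i x hx
    rw [← hunion]
    exact Finset.mem_biUnion.mpr ⟨i, Finset.mem_univ i, hx⟩
  have hbi : (S ∩ P) = Finset.univ.biUnion (fun i => (S ∩ P) ∩ T i) := by
    ext x
    simp only [Finset.mem_biUnion, Finset.mem_inter, Finset.mem_univ, true_and]
    constructor
    · rintro ⟨hxS, hxP⟩
      have : x ∈ Finset.univ.biUnion T := hunion ▸ hxS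
      obtain ⟨i, -, hi⟩ := Finset.mem_biUnion.mp this
      exact ⟨i, ⟨hxS, hxP⟩, hi⟩
    · rintro ⟨i, h, -⟩
      exact h
  have hsum : ∑ i, ((S ∩ P) ∩ T i).card = c := by
    rw [hc]
    conv_rhs => rw [hbi]
    exact (Finset.card_biUnion (fun i _ j _ hij =>
      Finset.disjoint_left.mpr (fun x hx hy =>
        (Finset.disjoint_left.mp (hdisj i j hij)) (Finset.mem_inter.mp hx).2
          (Finset.mem_inter.mp hy).2))).symm
  -- Pigeonhole: some i with ((S ∩ P) ∩ T i).card ≤ c - a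
  have hpig : ∃ i, ((S ∩ P) ∩ T i).card ≤ c - a := by
    by_contra h
    push_neg at h
    have hall : ∀ i : Fin (a + 1), c - a + 1 ≤ ((S ∩ P) ∩ T i).card := fun i => h i
    have hge : (a + 1) * (c - a + 1) ≤ ∑ i, ((S ∩ P) ∩ T i).card := by
      calc (a + 1) * (c - a + 1) = ∑ _i : Fin (a + 1), (c - a + 1) := by
            simp [Finset.sum_const, mul_comm]
        _ ≤ ∑ i, ((S ∩ P) ∩ T i).card := Finset.sum_le_sum (fun i _ => hall i)
    rw [hsum] at hge
    have hcc : c = a + (c - a) := by omega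
    nlinarith [Nat.sub_le c a]
  obtain ⟨i, hi⟩ := hpig
  refine ⟨i, ?_, ?_⟩
  · have heq : (S \ T i) ∩ P = (S ∩ P) \ T i := by
      ext x; simp only [Finset.mem_inter, Finset.mem_sdiff]; tauto
    rw [heq]
    have := Finset.card_sdiff_add_card_inter (S ∩ P) (T i)
    omega
  · have h1 : (S \ T i).card = S.card - (T i).card := Finset.card_sdiff_of_subset (hsub i)
    have := hsize i
    have := Finset.card_le_card (hsub i)
    omega
end
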